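/- Given t > 0, β > 0 and ρ > 0, set T_δ := t δ^{-β} for δ ∈ (0,1). Then there exist constants C* > 0 and δ₀ ∈ (0,1) such that Z(T_δ^{1+ρ}) ≥ C* T_δ² 𝒢(T_δ^{-1}) for all δ ∈ (0, δ₀]. -/

import Mathlib

/-!
Write `h s = ⟪P s G, G⟫`, `g s = ∫₀ˢ P u G` and `F s = ∫₀ˢ ∫₀ᵘ h`, so that `Z t = 2 ∫₀ᵗ F`.
The group law gives `⟪g s, P s G⟫ = ∫₀ˢ h`, whence `F = ‖g‖² / 2`: thus `0 ≤ F s ≤ ‖G‖² s²`,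
and `F` is positive just to the right of `0` when `G ≠ 0`, because `g' 0 = P 0 G ≠ 0`.
Two integrations by parts give `T² 𝒢(1/T) = ∫₀^∞ e^{-s/T} F s ds`. Splitting this integral at
`A = T^{1+ρ}`, the head is at most `∫₀^A F = Z A / 2`, while the tail is `O(T³ e^{-T^ρ/2})` and so
eventually smaller than the fixed positive number `∫₀^a F ≤ Z A / 2`. As `T_δ → ∞` when `δ → 0⁺`,
the claim holds with `C* = 1`.
-/

open MeasureTheory Set Filter Topology
open scoped RealInnerProductSpace

section PolynomialGrowth

variable {f : ℝ → ℝ} {b c : ℝ} {n : ℕ}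

lemma abs_integral_le_mul_pow_succ (hf : ∀ s, 0 ≤ s → |f s| ≤ c * s ^ n) {s : ℝ} (hs : 0 ≤ s) :
    |∫ u in (0:ℝ)..s, f u| ≤ c * s ^ (n + 1) := by
  have hc : 0 ≤ c := by simpa using (abs_nonneg _).trans (hf 1 zero_le_one)
  have hle : ∀ u ∈ uIoc (0:ℝ) s, ‖f u‖ ≤ c * s ^ n := fun u hu => by
    rw [uIoc_of_le hs] at hu
    exact (hf u hu.1.le).trans (by gcongr; exacts [hu.1.le, hu.2])
  simpa [abs_of_nonneg hs, pow_succ, mul_assoc] using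
    intervalIntegral.norm_integral_le_of_norm_le_const hle

lemma integrableOn_exp_neg_mul_mul (hf : Continuous f) (hbd : ∀ s, 0 ≤ s → |f s| ≤ c * s ^ n)
    (hb : 0 < b) : IntegrableOn (fun s => Real.exp (-b * s) * f s) (Ioi 0) := by
  have hdom : IntegrableOn (fun s : ℝ => c * (s ^ (n : ℝ) * Real.exp (-b * s ^ (1 : ℝ)))) (Ioi 0) :=
    (integrableOn_rpow_mul_exp_neg_mul_rpow (by linarith [n.cast_nonneg (α := ℝ)]) one_pos
      hb).const_mul c
  refine hdom.mono' (by fun_prop) ((ae_restrict_mem measurableSet_Ioi).mono fun s hs => ?_)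
  rw [Real.norm_eq_abs, abs_mul, Real.abs_exp, Real.rpow_natCast, Real.rpow_one]
  calc Real.exp (-b * s) * |f s| ≤ Real.exp (-b * s) * (c * s ^ n) := by
        gcongr; exact hbd s (le_of_lt hs)
    _ = _ := by ring

lemma tendsto_exp_neg_mul_mul_atTop (hbd : ∀ s, 0 ≤ s → |f s| ≤ c * s ^ n) (hb : 0 < b) :
    Tendsto (fun s => Real.exp (-b * s) * f s) atTop (𝓝 0) := by
  have hlim : Tendsto (fun s : ℝ => c * (s ^ (n : ℝ) * Real.exp (-b * s))) atTop (𝓝 0) := by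
    simpa using (tendsto_rpow_mul_exp_neg_mul_atTop_nhds_zero n b hb).const_mul c
  refine squeeze_zero_norm' ?_ hlim
  filter_upwards [eventually_ge_atTop 0] with s hs
  rw [Real.norm_eq_abs, abs_mul, Real.abs_exp, Real.rpow_natCast]
  calc Real.exp (-b * s) * |f s| ≤ Real.exp (-b * s) * (c * s ^ n) := by gcongr; exact hbd s hs
    _ = _ := by ring

lemma integral_exp_neg_mul_mul_eq (hf : Continuous f) (hbd : ∀ s, 0 ≤ s → |f s| ≤ c * s ^ n)
    (hb : 0 < b) :
    ∫ s in Ioi 0, Real.exp (-b * s) * f s =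
      b * ∫ s in Ioi 0, Real.exp (-b * s) * ∫ u in (0:ℝ)..s, f u := by
  set F : ℝ → ℝ := fun s => ∫ u in (0:ℝ)..s, f u
  have hF : ∀ s, HasDerivAt F (f s) s := fun s => hf.integral_hasStrictDerivAt 0 s |>.hasDerivAt
  have hFc : Continuous F := continuous_iff_continuousAt.2 fun s => (hF s).continuousAt
  have hFbd : ∀ s, 0 ≤ s → |F s| ≤ c * s ^ (n + 1) := fun s => abs_integral_le_mul_pow_succ hbd
  have hexp : ∀ s, HasDerivAt (fun s => Real.exp (-b * s)) (-b * Real.exp (-b * s)) s := fun s => by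
    simpa [mul_comm] using ((hasDerivAt_id s).const_mul (-b)).exp
  have hzero : Tendsto (fun s => Real.exp (-b * s) * F s) (𝓝[>] 0) (𝓝 0) := by
    have hcont : Continuous fun s => Real.exp (-b * s) * F s := by fun_prop
    simpa [F] using (hcont.tendsto 0).mono_left nhdsWithin_le_nhds
  have hparts := integral_Ioi_mul_deriv_eq_deriv_mul (fun s _ => hexp s) (fun s _ => hF s)
    (integrableOn_exp_neg_mul_mul hf hbd hb)
    (((integrableOn_exp_neg_mul_mul hFc hFbd hb).const_mul (-b)).congr
      (.of_forall fun s => by simp only [Pi.mul_apply, mul_assoc]))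
    hzero (tendsto_exp_neg_mul_mul_atTop hFbd hb)
  rw [hparts, ← integral_const_mul, sub_self, zero_sub, ← integral_neg]
  simp only [F, neg_mul, neg_neg, mul_assoc]

lemma integral_exp_neg_mul_mul_eq_sq_mul (hf : Continuous f)
    (hbd : ∀ s, 0 ≤ s → |f s| ≤ c * s ^ n) (hb : 0 < b) :
    ∫ s in Ioi 0, Real.exp (-b * s) * f s =
      b ^ 2 * ∫ s in Ioi 0, Real.exp (-b * s) * ∫ u in (0:ℝ)..s, ∫ v in (0:ℝ)..u, f v := by
  have hFc : Continuous fun s => ∫ u in (0:ℝ)..s, f u :=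
    intervalIntegral.continuous_primitive (fun _ _ => hf.intervalIntegrable _ _) 0
  rw [integral_exp_neg_mul_mul_eq hf hbd hb,
    integral_exp_neg_mul_mul_eq hFc (fun s => abs_integral_le_mul_pow_succ hbd) hb, sq, mul_assoc]

lemma integral_exp_neg_mul_mul_sq (hb : 0 < b) :
    ∫ s in Ioi 0, Real.exp (-b * s) * s ^ 2 = 2 / b ^ 3 := by
  have h := Real.integral_rpow_mul_exp_neg_mul_Ioi (a := 3) three_pos hb
  have hΓ : Real.Gamma 3 = 2 := by
    rw [show (3 : ℝ) = (2 : ℕ) + 1 by norm_num, Real.Gamma_nat_eq_factorial]; rfl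
  norm_num [hΓ] at h
  simp_rw [neg_mul, mul_comm (Real.exp _)]
  rw [h, div_eq_inv_mul]

lemma setIntegral_exp_neg_mul_le {F : ℝ → ℝ} (hFc : Continuous F) (hF0 : ∀ s, 0 ≤ F s)
    (hFle : ∀ s, 0 ≤ s → F s ≤ c * s ^ 2) (hb : 0 < b) {A : ℝ} (hA : 0 ≤ A) :
    ∫ s in Ioi 0, Real.exp (-b * s) * F s ≤
      (∫ s in (0:ℝ)..A, F s) + 16 * c / b ^ 3 * Real.exp (-(b * A / 2)) := by
  have hc : 0 ≤ c := by simpa using (hF0 1).trans (hFle 1 zero_le_one)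
  have hI : IntegrableOn (fun s => Real.exp (-b * s) * F s) (Ioi 0) :=
    integrableOn_exp_neg_mul_mul hFc (fun s hs => (abs_of_nonneg (hF0 s)).trans_le (hFle s hs)) hb
  set g : ℝ → ℝ := fun s => Real.exp (-(b * A / 2)) * c * (Real.exp (-(b / 2) * s) * s ^ 2)
  have hg : IntegrableOn g (Ioi 0) :=
    (integrableOn_exp_neg_mul_mul (by fun_prop) (n := 2) (c := 1)
      (fun s _ => by simp) (half_pos hb)).const_mul _
  have hhead : ∫ s in Ioc 0 A, Real.exp (-b * s) * F s ≤ ∫ s in (0:ℝ)..A, F s := by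
    rw [intervalIntegral.integral_of_le hA]
    refine setIntegral_mono_on (hI.mono_set Ioc_subset_Ioi_self) hFc.integrableOn_Ioc
      measurableSet_Ioc fun s hs => ?_
    have : Real.exp (-b * s) ≤ 1 := Real.exp_le_one_iff.2 (by nlinarith [hs.1])
    nlinarith [hF0 s]
  have htail : ∫ s in Ioi A, Real.exp (-b * s) * F s ≤ 16 * c / b ^ 3 * Real.exp (-(b * A / 2)) :=
    calc ∫ s in Ioi A, Real.exp (-b * s) * F s ≤ ∫ s in Ioi A, g s := by
          refine setIntegral_mono_on (hI.mono_set (Ioi_subset_Ioi hA))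
            (hg.mono_set (Ioi_subset_Ioi hA)) measurableSet_Ioi fun s hs => ?_
          have hsplit : Real.exp (-b * s) = Real.exp (-(b * s / 2)) * Real.exp (-(b / 2) * s) := by
            rw [← Real.exp_add]; ring_nf
          calc Real.exp (-b * s) * F s ≤ Real.exp (-b * s) * (c * s ^ 2) := by
                gcongr; exact hFle s (hA.trans hs.le)
            _ = Real.exp (-(b * s / 2)) * c * (Real.exp (-(b / 2) * s) * s ^ 2) := by
                rw [hsplit]; ring
            _ ≤ g s := by simp only [g]; gcongr; exact hs.le
      _ ≤ ∫ s in Ioi 0, g s :=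
          setIntegral_mono_set hg (.of_forall fun s => by positivity)
            (Ioi_subset_Ioi hA).eventuallyLE
      _ = 16 * c / b ^ 3 * Real.exp (-(b * A / 2)) := by
          rw [integral_const_mul, integral_exp_neg_mul_mul_sq (half_pos hb)]
          field_simp
          ring
  calc ∫ s in Ioi 0, Real.exp (-b * s) * F s
      = (∫ s in Ioc 0 A, Real.exp (-b * s) * F s) + ∫ s in Ioi A, Real.exp (-b * s) * F s := by
        rw [← setIntegral_union Ioc_disjoint_Ioi_same measurableSet_Ioi
          (hI.mono_set Ioc_subset_Ioi_self) (hI.mono_set (Ioi_subset_Ioi hA)),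
          Ioc_union_Ioi_eq_Ioi hA]
    _ ≤ _ := add_le_add hhead htail

end PolynomialGrowth

lemma tendsto_pow_three_mul_exp_neg_rpow_atTop {ρ : ℝ} (hρ : 0 < ρ) :
    Tendsto (fun T : ℝ => T ^ 3 * Real.exp (-(T ^ ρ / 2))) atTop (𝓝 0) := by
  have hcomp := (tendsto_rpow_mul_exp_neg_mul_atTop_nhds_zero (3 / ρ) (1 / 2) one_half_pos).comp
    (tendsto_rpow_atTop hρ)
  refine hcomp.congr' ?_
  filter_upwards [eventually_gt_atTop 0] with T hT
  rw [Function.comp_apply, ← Real.rpow_mul hT.le, mul_div_cancel₀ _ hρ.ne',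
    show (3 : ℝ) = (3 : ℕ) by norm_num, Real.rpow_natCast]
  ring_nf

theorem eventually_integral_exp_neg_inv_mul_le {F : ℝ → ℝ} {c a ρ : ℝ} (hFc : Continuous F)
    (hF0 : ∀ s, 0 ≤ F s) (hFle : ∀ s, 0 ≤ s → F s ≤ c * s ^ 2)
    (ha : 0 < ∫ s in (0:ℝ)..a, F s) (hρ : 0 < ρ) :
    ∀ᶠ T in atTop,
      ∫ s in Ioi 0, Real.exp (-T⁻¹ * s) * F s ≤ 2 * ∫ s in (0:ℝ)..T ^ (1 + ρ), F s := by
  have hsmall : ∀ᶠ T : ℝ in atTop,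
      16 * c * (T ^ 3 * Real.exp (-(T ^ ρ / 2))) < ∫ s in (0:ℝ)..a, F s :=
    ((tendsto_pow_three_mul_exp_neg_rpow_atTop hρ).const_mul (16 * c)).eventually_lt_const
      (by simpa using ha)
  filter_upwards [eventually_gt_atTop 0, hsmall,
    (tendsto_rpow_atTop (by linarith : 0 < 1 + ρ)).eventually_ge_atTop a] with T hT hsmall haT
  have hA : T⁻¹ * T ^ (1 + ρ) = T ^ ρ := by
    rw [Real.rpow_add hT, Real.rpow_one, ← mul_assoc, inv_mul_cancel₀ hT.ne', one_mul]
  have hsplit := intervalIntegral.integral_add_adjacent_intervals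
    (hFc.intervalIntegrable (μ := volume) 0 a) (hFc.intervalIntegrable a (T ^ (1 + ρ)))
  have hrest := intervalIntegral.integral_nonneg (μ := volume) haT fun s _ => hF0 s
  have hbound := setIntegral_exp_neg_mul_le hFc hF0 hFle (inv_pos.2 hT) (A := T ^ (1 + ρ))
    (by positivity)
  rw [hA, inv_pow, div_inv_eq_mul] at hbound
  linarith

lemma exists_integral_norm_sq_pos {E : Type*} [NormedAddCommGroup E] [NormedSpace ℝ E]
    {g : ℝ → E} {v : E} (hgc : Continuous g) (hg : HasDerivAt g v 0) (hg0 : g 0 = 0)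
    (hv : v ≠ 0) : ∃ a, 0 < ∫ s in (0:ℝ)..a, ‖g s‖ ^ 2 := by
  obtain ⟨a, ha, hne⟩ :=
    mem_nhdsGT_iff_exists_Ioo_subset.1 (hg.tendsto_slope_zero_right.eventually_ne hv)
  refine ⟨a, intervalIntegral.intervalIntegral_pos_of_pos_on
    ((by fun_prop : Continuous fun s => ‖g s‖ ^ 2).intervalIntegrable _ _) (fun s hs => ?_) ha⟩
  have : s⁻¹ • (g (0 + s) - g 0) ≠ 0 := hne hs
  rw [zero_add, hg0, sub_zero] at this
  exact pow_pos (norm_pos_iff.2 (right_ne_zero_of_smul this)) 2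

section OrbitIntegral

variable {H : Type*} [NormedAddCommGroup H] [InnerProductSpace ℝ H] [CompleteSpace H]
  {P : ℝ → H ≃ₗᵢ[ℝ] H}

lemma integral_integral_inner_eq_norm_sq (hPadd : ∀ s t : ℝ, ∀ x : H, P (s + t) x = P s (P t x))
    (hPcont : ∀ x : H, Continuous fun t : ℝ => P t x) (G : H) (s : ℝ) :
    ∫ u in (0:ℝ)..s, ∫ v in (0:ℝ)..u, ⟪P v G, G⟫ = ‖∫ u in (0:ℝ)..s, P u G‖ ^ 2 / 2 := by
  set g : ℝ → H := fun s => ∫ u in (0:ℝ)..s, P u G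
  have hg : ∀ s, HasDerivAt g (P s G) s := fun s =>
    ((hPcont G).integral_hasStrictDerivAt 0 s).hasDerivAt
  have hh : Continuous fun v => ⟪P v G, G⟫ := (hPcont G).inner continuous_const
  have hinner : ∀ s, ⟪g s, P s G⟫ = ∫ v in (0:ℝ)..s, ⟪P v G, G⟫ := fun s =>
    calc ⟪g s, P s G⟫ = ∫ u in (0:ℝ)..s, ⟪P s G, P u G⟫ := by
          rw [real_inner_comm]
          exact ((innerSL ℝ (P s G)).intervalIntegral_comp_comm
            ((hPcont G).intervalIntegrable 0 s)).symm
      _ = ∫ u in (0:ℝ)..s, ⟪P (s - u) G, G⟫ := by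
          refine intervalIntegral.integral_congr fun u _ => ?_
          rw [← add_sub_cancel u s, hPadd, add_sub_cancel_left, LinearIsometryEquiv.inner_map_map]
      _ = ∫ v in (0:ℝ)..s, ⟪P v G, G⟫ := by
          rw [intervalIntegral.integral_comp_sub_left (fun v => ⟪P v G, G⟫) s]; simp
  have hderiv : ∀ s, HasDerivAt (fun s => ‖g s‖ ^ 2 / 2) (∫ v in (0:ℝ)..s, ⟪P v G, G⟫) s := by
    intro s
    have := ((hg s).norm_sq).div_const 2
    rwa [hinner, mul_div_cancel_left₀ _ two_ne_zero] at this
  have hH : Continuous fun s => ∫ v in (0:ℝ)..s, ⟪P v G, G⟫ :=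
    intervalIntegral.continuous_primitive (fun _ _ => hh.intervalIntegrable _ _) 0
  rw [intervalIntegral.integral_eq_sub_of_hasDerivAt (fun x _ => hderiv x)
    (hH.intervalIntegrable _ _)]
  simp [g]

lemma exists_integral_integral_integral_inner_pos
    (hPadd : ∀ s t : ℝ, ∀ x : H, P (s + t) x = P s (P t x))
    (hPcont : ∀ x : H, Continuous fun t : ℝ => P t x) {G : H} (hG : G ≠ 0) :
    ∃ a, 0 < ∫ s in (0:ℝ)..a, ∫ u in (0:ℝ)..s, ∫ v in (0:ℝ)..u, ⟪P v G, G⟫ := by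
  have hg : ∀ s, HasDerivAt (fun s => ∫ u in (0:ℝ)..s, P u G) (P s G) s := fun s =>
    ((hPcont G).integral_hasStrictDerivAt 0 s).hasDerivAt
  obtain ⟨a, ha⟩ := exists_integral_norm_sq_pos
    (continuous_iff_continuousAt.2 fun s => (hg s).continuousAt) (hg 0) (by simp)
    (by simpa using hG)
  exact ⟨a, by simpa [integral_integral_inner_eq_norm_sq hPadd hPcont,
    intervalIntegral.integral_div] using ha⟩

theorem eventually_sq_mul_integral_exp_neg_inv_mul_inner_le
    (hPadd : ∀ s t : ℝ, ∀ x : H, P (s + t) x = P s (P t x))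
    (hPcont : ∀ x : H, Continuous fun t : ℝ => P t x) (G : H) {ρ : ℝ} (hρ : 0 < ρ) :
    ∀ᶠ T in atTop, T ^ 2 * ∫ s in Ioi 0, Real.exp (-T⁻¹ * s) * ⟪P s G, G⟫ ≤
      2 * ∫ s in (0:ℝ)..T ^ (1 + ρ), ∫ u in (0:ℝ)..s, ∫ v in (0:ℝ)..u, ⟪P v G, G⟫ := by
  rcases eq_or_ne G 0 with rfl | hG
  · simp
  have hF := integral_integral_inner_eq_norm_sq hPadd hPcont G
  have hbd : ∀ s, 0 ≤ s → |⟪P s G, G⟫| ≤ ‖G‖ ^ 2 * s ^ 0 := fun s _ => by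
    simpa [sq] using abs_real_inner_le_norm (P s G) G
  have hFle : ∀ s, 0 ≤ s → ∫ u in (0:ℝ)..s, ∫ v in (0:ℝ)..u, ⟪P v G, G⟫ ≤ ‖G‖ ^ 2 * s ^ 2 :=
    fun s hs => (le_abs_self _).trans
      (abs_integral_le_mul_pow_succ (fun _ => abs_integral_le_mul_pow_succ hbd) hs)
  obtain ⟨a, ha⟩ := exists_integral_integral_integral_inner_pos hPadd hPcont hG
  filter_upwards [eventually_gt_atTop 0, eventually_integral_exp_neg_inv_mul_le
    (by simp only [hF]; fun_prop) (fun s => by rw [hF]; positivity) hFle ha hρ] with T hT hle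
  rwa [integral_exp_neg_mul_mul_eq_sq_mul ((hPcont G).inner continuous_const) hbd (inv_pos.2 hT),
    ← mul_assoc, inv_pow, mul_inv_cancel₀ (by positivity), one_mul]

end OrbitIntegral

theorem stmt8_general {H : Type*} [NormedAddCommGroup H] [InnerProductSpace ℝ H] [CompleteSpace H]
    (P : ℝ → H ≃ₗᵢ[ℝ] H)
    (hPadd : ∀ s t : ℝ, ∀ x : H, P (s + t) x = P s (P t x))
    (hPcont : ∀ x : H, Continuous fun t : ℝ => P t x)
    (G : H)
    (Z : ℝ → ℝ)
    (hZ : ∀ t : ℝ, Z t =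
      2 * ∫ s in (0:ℝ)..t, ∫ s₁ in (0:ℝ)..s, ∫ s₂ in (0:ℝ)..s₁, ⟪P s₂ G, G⟫)
    (𝒢 : ℝ → ℝ)
    (h𝒢 : ∀ l : ℝ, 𝒢 l = ∫ s in Set.Ioi (0:ℝ), Real.exp (-l * s) * ⟪P s G, G⟫)
    (t β ρ : ℝ) (ht : 0 < t) (hβ : 0 < β) (hρ : 0 < ρ) :
    ∃ C > (0:ℝ), ∃ δ₀ ∈ Set.Ioo (0:ℝ) 1, ∀ δ ∈ Set.Ioc (0:ℝ) δ₀,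
      C * (t * δ ^ (-β)) ^ 2 * 𝒢 ((t * δ ^ (-β))⁻¹) ≤ Z ((t * δ ^ (-β)) ^ (1 + ρ)) := by
  have hev : ∀ᶠ T in atTop, T ^ 2 * 𝒢 T⁻¹ ≤ Z (T ^ (1 + ρ)) := by
    simpa only [h𝒢, hZ] using eventually_sq_mul_integral_exp_neg_inv_mul_inner_le hPadd hPcont G hρ
  have hT : Tendsto (fun δ : ℝ => t * δ ^ (-β)) (𝓝[>] 0) atTop :=
    (tendsto_rpow_neg_nhdsGT_zero (neg_neg_of_pos hβ)).const_mul_atTop ht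
  obtain ⟨δ₁, hδ₁, hsub⟩ := mem_nhdsGT_iff_exists_Ioc_subset.1 (hT.eventually hev)
  refine ⟨1, one_pos, min δ₁ (1 / 2), ⟨lt_min hδ₁ one_half_pos, by norm_num⟩, fun δ hδ => ?_⟩
  rw [one_mul]
  exact hsub ⟨hδ.1, hδ.2.trans (min_le_left _ _)⟩

/-- Let `(P_t)` be a strongly continuous one-parameter group of orthogonal
operators on a real Hilbert space `H`, `G ∈ H`, `h(s) = ⟨P_s G, G⟩`,
`Z(t) = 2∫₀^t∫₀^s∫₀^{s₁} h(s₂) ds₂ ds₁ ds` and `𝒢(λ) = ∫₀^∞ e^{-λs} h(s) ds`.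
Given `t > 0`, `β > 0`, `ρ > 0`, set `T_δ := t δ^{-β}` for `δ ∈ (0,1)`. Then there exist
`C* > 0` and `δ₀ ∈ (0,1)` such that `Z(T_δ^{1+ρ}) ≥ C* T_δ² 𝒢(T_δ⁻¹)` for all `δ ∈ (0, δ₀]`. -/
theorem stmt8 {H : Type*} [NormedAddCommGroup H] [InnerProductSpace ℝ H] [CompleteSpace H]
    (P : ℝ → H ≃ₗᵢ[ℝ] H)
    (hP0 : ∀ x : H, P 0 x = x)
    (hPadd : ∀ s t : ℝ, ∀ x : H, P (s + t) x = P s (P t x))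
    (hPcont : ∀ x : H, Continuous fun t : ℝ => P t x)
    (G : H)
    (Z : ℝ → ℝ)
    (hZ : ∀ t : ℝ, Z t =
      2 * ∫ s in (0:ℝ)..t, ∫ s₁ in (0:ℝ)..s, ∫ s₂ in (0:ℝ)..s₁, ⟪P s₂ G, G⟫)
    (𝒢 : ℝ → ℝ)
    (h𝒢 : ∀ l : ℝ, 𝒢 l = ∫ s in Set.Ioi (0:ℝ), Real.exp (-l * s) * ⟪P s G, G⟫)
    (t β ρ : ℝ) (ht : 0 < t) (hβ : 0 < β) (hρ : 0 < ρ) :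
    ∃ C > (0:ℝ), ∃ δ₀ ∈ Set.Ioo (0:ℝ) 1, ∀ δ ∈ Set.Ioc (0:ℝ) δ₀,
      C * (t * δ ^ (-β)) ^ 2 * 𝒢 ((t * δ ^ (-β))⁻¹) ≤ Z ((t * δ ^ (-β)) ^ (1 + ρ)) :=
  stmt8_general P hPadd hPcont G Z hZ 𝒢 h𝒢 t β ρ ht hβ hρ
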